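/- arXiv:2202.03483 — 2 statements merged into one kernel-verified Lean document; each statement's English description precedes it below -/
import Mathlib

section
/- Under the same setup as the previous adapted-heads lemma (w_i := (I_k − αBᵀB)w + αBᵀB*w*_i, with (1/n)∑ w*_i w*_iᵀ ⪯ L*²I_k, ‖(1/n)∑ w*_i‖₂ ≤ η* ≤ L*, and ‖I_k − αBᵀB‖₂ ≤ τ), the maximum singular value satisfies σ_max((1/n)∑_{i=1}^n w_i w_iᵀ) ≤ (‖I_k − αBᵀB‖₂‖w‖₂ + √(α(1+τ)) L*)². -/
open Matrix

noncomputable def evNorm {n : Type*} [Fintype n] (v : n → ℝ) : ℝ :=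
  Real.sqrt (∑ i, v i ^ 2)

noncomputable def specNorm {m n : Type*} [Fintype m] [Fintype n] (A : Matrix m n ℝ) : ℝ :=
  sSup {c : ℝ | ∃ v : n → ℝ, evNorm v = 1 ∧ c = evNorm (A.mulVec v)}

noncomputable def sigmaMin {m n : Type*} [Fintype m] [Fintype n] (A : Matrix m n ℝ) : ℝ :=
  sInf {c : ℝ | ∃ v : n → ℝ, evNorm v = 1 ∧ c = evNorm (A.mulVec v)}


open Finset

section Helpers

variable {m n : Type*} [Fintype m] [Fintype n]

lemma evNorm_nonneg (v : n → ℝ) : 0 ≤ evNorm v := Real.sqrt_nonneg _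

lemma evNorm_sq (v : n → ℝ) : evNorm v ^ 2 = ∑ i, v i ^ 2 := by
  rw [evNorm, Real.sq_sqrt (Finset.sum_nonneg fun i _ => sq_nonneg _)]

lemma dot_self_eq (v : n → ℝ) : v ⬝ᵥ v = evNorm v ^ 2 := by
  rw [evNorm_sq]; simp [dotProduct, sq]

lemma evNorm_smul (c : ℝ) (v : n → ℝ) : evNorm (c • v) = |c| * evNorm v := by
  simp only [evNorm, Pi.smul_apply, smul_eq_mul, mul_pow, ← Finset.mul_sum]
  rw [Real.sqrt_mul (sq_nonneg _), Real.sqrt_sq_eq_abs]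

lemma abs_dot_le (a b : n → ℝ) : |a ⬝ᵥ b| ≤ evNorm a * evNorm b := by
  have h := Finset.sum_mul_sq_le_sq_mul_sq Finset.univ a b
  rw [← Real.sqrt_sq_eq_abs, evNorm, evNorm, ← Real.sqrt_mul (Finset.sum_nonneg fun i _ => sq_nonneg _)]
  exact Real.sqrt_le_sqrt h

lemma dot_le (a b : n → ℝ) : a ⬝ᵥ b ≤ evNorm a * evNorm b :=
  (le_abs_self _).trans (abs_dot_le a b)

lemma specNorm_nonneg (A : Matrix m n ℝ) : 0 ≤ specNorm A :=
  Real.sSup_nonneg (by rintro x ⟨v, -, rfl⟩; exact evNorm_nonneg _)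

lemma specNorm_bddAbove (A : Matrix m n ℝ) :
    BddAbove {c : ℝ | ∃ v : n → ℝ, evNorm v = 1 ∧ c = evNorm (A.mulVec v)} := by
  refine ⟨Real.sqrt (∑ j, ∑ i, A j i ^ 2), ?_⟩
  rintro x ⟨v, hv, rfl⟩
  rw [evNorm]
  apply Real.sqrt_le_sqrt
  calc ∑ j, A.mulVec v j ^ 2
      ≤ ∑ j, (∑ i, A j i ^ 2) * (∑ i, v i ^ 2) := by
        refine Finset.sum_le_sum fun j _ => ?_
        exact Finset.sum_mul_sq_le_sq_mul_sq Finset.univ (A j) v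
    _ = ∑ j, ∑ i, A j i ^ 2 := by
        have : ∑ i, v i ^ 2 = 1 := by
          have := evNorm_sq v; rw [hv] at this; simpa using this.symm
        simp [this]

lemma evNorm_mulVec_le (A : Matrix m n ℝ) (v : n → ℝ) :
    evNorm (A.mulVec v) ≤ specNorm A * evNorm v := by
  rcases eq_or_ne (evNorm v) 0 with h0 | h0
  · have hv : v = 0 := by
      have h1 : ∑ i, v i ^ 2 = 0 := by
        have := evNorm_sq v; rw [h0] at this; simpa using this.symm
      funext i
      have := (Finset.sum_eq_zero_iff_of_nonneg (fun i _ => sq_nonneg (v i))).1 h1 i (Finset.mem_univ i)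
      exact pow_eq_zero_iff (n := 2) (by norm_num) |>.1 this
    simp [hv, h0, evNorm, Matrix.mulVec_zero]
  · have hpos : 0 < evNorm v := lt_of_le_of_ne (evNorm_nonneg v) (Ne.symm h0)
    have hu : evNorm ((evNorm v)⁻¹ • v) = 1 := by
      rw [evNorm_smul, abs_of_pos (by positivity), inv_mul_cancel₀ h0]
    have hmem : evNorm (A.mulVec ((evNorm v)⁻¹ • v)) ≤ specNorm A :=
      le_csSup (specNorm_bddAbove A) ⟨_, hu, rfl⟩
    rw [Matrix.mulVec_smul, evNorm_smul, abs_of_pos (by positivity)] at hmem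
    calc evNorm (A.mulVec v) = evNorm v * ((evNorm v)⁻¹ * evNorm (A.mulVec v)) := by
          field_simp
      _ ≤ evNorm v * specNorm A := by
          exact mul_le_mul_of_nonneg_left hmem hpos.le
      _ = specNorm A * evNorm v := mul_comm _ _

lemma sum_dot {ι : Type*} (s : Finset ι) (f : ι → n → ℝ) (z : n → ℝ) :
    (∑ i ∈ s, f i) ⬝ᵥ z = ∑ i ∈ s, f i ⬝ᵥ z := by
  simp only [dotProduct, Finset.sum_apply, Finset.sum_mul]
  exact Finset.sum_comm

lemma sum_mulVec' {ι : Type*} (s : Finset ι) (M : ι → Matrix m n ℝ) (x : n → ℝ) :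
    (∑ i ∈ s, M i).mulVec x = ∑ i ∈ s, (M i).mulVec x := by
  ext j
  simp only [Matrix.mulVec, dotProduct, Finset.sum_apply, Matrix.sum_apply, Finset.sum_mul]
  exact Finset.sum_comm

lemma vecMulVec_mulVec' (a b x : n → ℝ) :
    (vecMulVec a b).mulVec x = (b ⬝ᵥ x) • a := by
  ext j
  simp [Matrix.mulVec, dotProduct, vecMulVec_apply, Finset.mul_sum, mul_comm, mul_left_comm]

lemma dot_sum {ι : Type*} (s : Finset ι) (z : n → ℝ) (f : ι → n → ℝ) :
    z ⬝ᵥ (∑ i ∈ s, f i) = ∑ i ∈ s, z ⬝ᵥ f i := by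
  simp only [dotProduct, Finset.sum_apply, Finset.mul_sum]
  exact Finset.sum_comm

lemma mulVec_dot (M : Matrix m n ℝ) (a : n → ℝ) (b : m → ℝ) :
    (M.mulVec a) ⬝ᵥ b = a ⬝ᵥ (Mᵀ.mulVec b) := by
  rw [Matrix.dotProduct_mulVec, Matrix.vecMul_transpose]

lemma evNorm_eq_sqrt_dot (v : n → ℝ) : evNorm v = Real.sqrt (v ⬝ᵥ v) := by
  rw [dot_self_eq, Real.sqrt_sq (evNorm_nonneg v)]

lemma le_of_sq_le_sq' {a b : ℝ} (ha : 0 ≤ a) (hb : 0 ≤ b) (h : a ^ 2 ≤ b ^ 2) : a ≤ b := by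
  nlinarith


end Helpers

set_option maxHeartbeats 1200000 in
/-- upper bound on the maximum singular value of the Gram matrix of
the adapted heads `w_i = (I_k − αBᵀB)w + αBᵀB*w*_i`. -/
theorem stmt5 {d k n : ℕ} (hn : 0 < n)
    (B : Matrix (Fin d) (Fin k) ℝ)
    (Bstar : Matrix (Fin d) (Fin k) ℝ) (hstar : Bstarᵀ * Bstar = 1)
    (w : Fin k → ℝ) (wstar : Fin n → Fin k → ℝ)
    (α τ η L : ℝ) (hα : 0 < α) (hτ0 : 0 ≤ τ)
    (hdiv : ((L ^ 2 • (1 : Matrix (Fin k) (Fin k) ℝ)) -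
        ((n : ℝ)⁻¹ • ∑ i, vecMulVec (wstar i) (wstar i))).PosSemidef)
    (havg : evNorm ((n : ℝ)⁻¹ • ∑ i, wstar i) ≤ η) (hηL : η ≤ L)
    (hΔ : specNorm (1 - α • (Bᵀ * B)) ≤ τ) :
    specNorm ((n : ℝ)⁻¹ • ∑ i,
        vecMulVec ((1 - α • (Bᵀ * B)).mulVec w + α • (Bᵀ * Bstar).mulVec (wstar i))
          ((1 - α • (Bᵀ * B)).mulVec w + α • (Bᵀ * Bstar).mulVec (wstar i))) ≤
      (specNorm (1 - α • (Bᵀ * B)) * evNorm w + Real.sqrt (α * (1 + τ)) * L) ^ 2 := by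
  have hn0 : ((n : ℝ)) ≠ 0 := Nat.cast_ne_zero.2 hn.ne'
  have hninv : (0:ℝ) ≤ (n : ℝ)⁻¹ := by positivity
  set Δ : Matrix (Fin k) (Fin k) ℝ := 1 - α • (Bᵀ * B) with hΔdef
  set W : Fin n → Fin k → ℝ :=
    fun i => Δ.mulVec w + α • (Bᵀ * Bstar).mulVec (wstar i) with hWdef
  set A0 := specNorm Δ * evNorm w with hA0def
  set C0 := Real.sqrt (α * (1 + τ)) * L with hC0def
  have hL0 : 0 ≤ L := le_trans (le_trans (evNorm_nonneg _) havg) hηL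
  have hη0 : 0 ≤ η := le_trans (evNorm_nonneg _) havg
  have hA0 : 0 ≤ A0 := mul_nonneg (specNorm_nonneg _) (evNorm_nonneg _)
  have hC0 : 0 ≤ C0 := mul_nonneg (Real.sqrt_nonneg _) hL0
  have hsq : Real.sqrt (α * (1 + τ)) ^ 2 = α * (1 + τ) :=
    Real.sq_sqrt (by positivity)
  have hc2 : (0:ℝ) ≤ (A0 + C0) ^ 2 := sq_nonneg _
  -- S bound
  have hS : ∀ x : Fin k → ℝ, (n:ℝ)⁻¹ * ∑ i, (wstar i ⬝ᵥ x) ^ 2 ≤ L ^ 2 * (x ⬝ᵥ x) := by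
    intro x
    have h := hdiv.dotProduct_mulVec_nonneg x
    have hstarx : star x = x := by funext j; simp
    rw [hstarx, Matrix.sub_mulVec, Matrix.smul_mulVec, Matrix.one_mulVec,
      Matrix.smul_mulVec, dotProduct_sub, dotProduct_smul, dotProduct_smul,
      sum_mulVec', dot_sum] at h
    have hterm : ∀ i : Fin n, x ⬝ᵥ (vecMulVec (wstar i) (wstar i)).mulVec x
          = (wstar i ⬝ᵥ x) ^ 2 := by
        intro i
        rw [vecMulVec_mulVec', dotProduct_smul, smul_eq_mul, dotProduct_comm, sq]
    simp only [hterm, smul_eq_mul] at h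
    linarith
  -- B bound
  have hB : ∀ x : Fin k → ℝ, α * ((B.mulVec x) ⬝ᵥ (B.mulVec x)) ≤ (1 + τ) * (x ⬝ᵥ x) := by
    intro x
    have hΔx : |x ⬝ᵥ Δ.mulVec x| ≤ τ * (x ⬝ᵥ x) := by
      calc |x ⬝ᵥ Δ.mulVec x| ≤ evNorm x * evNorm (Δ.mulVec x) := abs_dot_le _ _
        _ ≤ evNorm x * (specNorm Δ * evNorm x) :=
            mul_le_mul_of_nonneg_left (evNorm_mulVec_le _ _) (evNorm_nonneg _)
        _ ≤ evNorm x * (τ * evNorm x) := by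
            apply mul_le_mul_of_nonneg_left _ (evNorm_nonneg _)
            exact mul_le_mul_of_nonneg_right hΔ (evNorm_nonneg _)
        _ = τ * (x ⬝ᵥ x) := by rw [dot_self_eq]; ring
    have hexp : x ⬝ᵥ Δ.mulVec x = x ⬝ᵥ x - α * ((B.mulVec x) ⬝ᵥ (B.mulVec x)) := by
      rw [hΔdef, Matrix.sub_mulVec, Matrix.smul_mulVec, Matrix.one_mulVec,
        dotProduct_sub, dotProduct_smul, smul_eq_mul, ← Matrix.mulVec_mulVec,
        dotProduct_mulVec, Matrix.vecMul_transpose]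
    have := abs_le.1 hΔx
    linarith [this.1, this.2]
  -- Bstarᵀ is a contraction
  have hBstar_iso : ∀ z : Fin k → ℝ,
      (Bstar.mulVec z) ⬝ᵥ (Bstar.mulVec z) = z ⬝ᵥ z := by
    intro z
    rw [mulVec_dot, Matrix.mulVec_mulVec, hstar, Matrix.one_mulVec]
  have hBst : ∀ y : Fin d → ℝ, evNorm (Bstarᵀ.mulVec y) ≤ evNorm y := by
    intro y
    set z := Bstarᵀ.mulVec y with hz
    have h1 : z ⬝ᵥ z ≤ evNorm z * evNorm y := by
      calc z ⬝ᵥ z = (Bstar.mulVec z) ⬝ᵥ y := by rw [hz, ← mulVec_dot]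
        _ ≤ evNorm (Bstar.mulVec z) * evNorm y := dot_le _ _
        _ = evNorm z * evNorm y := by
            rw [evNorm_eq_sqrt_dot (Bstar.mulVec z), hBstar_iso, ← evNorm_eq_sqrt_dot]
    rw [dot_self_eq] at h1
    nlinarith [evNorm_nonneg z, evNorm_nonneg y]
  -- quadratic form bound
  have hq : ∀ x : Fin k → ℝ, evNorm x = 1 →
      (n:ℝ)⁻¹ * ∑ i, (W i ⬝ᵥ x) ^ 2 ≤ (A0 + C0) ^ 2 := by
    intro x hx
    have hxx : x ⬝ᵥ x = 1 := by rw [dot_self_eq, hx]; norm_num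
    set u : Fin k → ℝ := Bstarᵀ.mulVec (B.mulVec x) with hu
    set a : ℝ := (Δ.mulVec w) ⬝ᵥ x with ha
    have hdecomp : ∀ i, W i ⬝ᵥ x = a + α * (wstar i ⬝ᵥ u) := by
      intro i
      have h2 : ((Bᵀ * Bstar).mulVec (wstar i)) ⬝ᵥ x = wstar i ⬝ᵥ u := by
        rw [mulVec_dot, Matrix.transpose_mul, Matrix.transpose_transpose, ← Matrix.mulVec_mulVec, hu]
      rw [hWdef]
      simp only []
      rw [add_dotProduct, smul_dotProduct, smul_eq_mul, h2]
    have habs : |a| ≤ A0 := by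
      calc |a| ≤ evNorm (Δ.mulVec w) * evNorm x := abs_dot_le _ _
        _ = evNorm (Δ.mulVec w) := by rw [hx, mul_one]
        _ ≤ A0 := evNorm_mulVec_le _ _
    have hu2 : α * (u ⬝ᵥ u) ≤ 1 + τ := by
      have h1 : evNorm u ≤ evNorm (B.mulVec x) := hBst _
      have h2 := hB x
      rw [hxx, mul_one] at h2
      have h3 : u ⬝ᵥ u ≤ (B.mulVec x) ⬝ᵥ (B.mulVec x) := by
        rw [dot_self_eq, dot_self_eq]
        exact pow_le_pow_left₀ (evNorm_nonneg _) h1 2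
      nlinarith
    have hue : u ⬝ᵥ u = evNorm u ^ 2 := dot_self_eq u
    have hkey : α * evNorm u ≤ Real.sqrt (α * (1 + τ)) := by
      have h1 : (α * evNorm u) ^ 2 ≤ α * (1 + τ) := by
        have hu2' : α * (evNorm u ^ 2) ≤ 1 + τ := by rw [← hue]; exact hu2
        nlinarith [mul_le_mul_of_nonneg_left hu2' hα.le]
      calc α * evNorm u = Real.sqrt ((α * evNorm u) ^ 2) := by
            rw [Real.sqrt_sq (mul_nonneg hα.le (evNorm_nonneg u))]
        _ ≤ Real.sqrt (α * (1 + τ)) := Real.sqrt_le_sqrt h1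
    set s : ℝ := (n:ℝ)⁻¹ * ∑ i, α * (wstar i ⬝ᵥ u) with hs
    have hsval : s = α * (((n : ℝ)⁻¹ • ∑ i, wstar i) ⬝ᵥ u) := by
      rw [hs, smul_dotProduct, sum_dot, smul_eq_mul, Finset.mul_sum, Finset.mul_sum,
        Finset.mul_sum]
      exact Finset.sum_congr rfl fun i _ => by ring
    have hsabs : |s| ≤ C0 := by
      rw [hsval, abs_mul, abs_of_pos hα]
      calc α * |((n : ℝ)⁻¹ • ∑ i, wstar i) ⬝ᵥ u|
          ≤ α * (evNorm ((n : ℝ)⁻¹ • ∑ i, wstar i) * evNorm u) :=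
            mul_le_mul_of_nonneg_left (abs_dot_le _ _) hα.le
        _ ≤ α * (η * evNorm u) := by
            apply mul_le_mul_of_nonneg_left _ hα.le
            exact mul_le_mul_of_nonneg_right havg (evNorm_nonneg _)
        _ = (α * evNorm u) * η := by ring
        _ ≤ Real.sqrt (α * (1 + τ)) * η :=
            mul_le_mul_of_nonneg_right hkey hη0
        _ ≤ C0 := mul_le_mul_of_nonneg_left hηL (Real.sqrt_nonneg _)
    set Q : ℝ := (n:ℝ)⁻¹ * ∑ i, (α * (wstar i ⬝ᵥ u)) ^ 2 with hQ
    have hQle : Q ≤ C0 ^ 2 := by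
      have h1 : Q = α ^ 2 * ((n:ℝ)⁻¹ * ∑ i, (wstar i ⬝ᵥ u) ^ 2) := by
        rw [hQ, Finset.mul_sum, Finset.mul_sum, Finset.mul_sum]
        apply Finset.sum_congr rfl
        intro i _
        ring
      have h2 := hS u
      have hC0sq : C0 ^ 2 = α * (1 + τ) * L ^ 2 := by
        rw [hC0def, mul_pow, hsq]
      calc Q = α ^ 2 * ((n:ℝ)⁻¹ * ∑ i, (wstar i ⬝ᵥ u) ^ 2) := h1
        _ ≤ α ^ 2 * (L ^ 2 * (u ⬝ᵥ u)) := mul_le_mul_of_nonneg_left h2 (sq_nonneg α)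
        _ = (α * L ^ 2) * (α * (u ⬝ᵥ u)) := by ring
        _ ≤ (α * L ^ 2) * (1 + τ) :=
            mul_le_mul_of_nonneg_left hu2 (mul_nonneg hα.le (sq_nonneg L))
        _ = C0 ^ 2 := by rw [hC0sq]; ring
    have hqeq : (n:ℝ)⁻¹ * ∑ i, (W i ⬝ᵥ x) ^ 2 = a ^ 2 + 2 * a * s + Q := by
      simp only [hdecomp]
      rw [hs, hQ]
      have hexp : ∑ i : Fin n, (a + α * (wstar i ⬝ᵥ u)) ^ 2
          = (n:ℝ) * a ^ 2 + 2 * a * ∑ i, α * (wstar i ⬝ᵥ u)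
            + ∑ i, (α * (wstar i ⬝ᵥ u)) ^ 2 := by
        simp_rw [add_sq]
        rw [Finset.sum_add_distrib, Finset.sum_add_distrib, Finset.sum_const,
          Finset.card_univ, Fintype.card_fin, nsmul_eq_mul, ← Finset.mul_sum]
      rw [hexp]
      field_simp
    rw [hqeq]
    have ha1 := abs_le.1 habs
    have hs1 := abs_le.1 hsabs
    nlinarith [mul_nonneg (by linarith [ha1.2] : (0:ℝ) ≤ A0 - a) (by linarith [hs1.2] : (0:ℝ) ≤ C0 - s),
      mul_nonneg (by linarith [ha1.1] : (0:ℝ) ≤ A0 + a) (by linarith [hs1.1] : (0:ℝ) ≤ C0 + s),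
      mul_nonneg (by linarith [ha1.2] : (0:ℝ) ≤ A0 - a) (by linarith [ha1.1] : (0:ℝ) ≤ A0 + a)]
  -- final step
  apply Real.sSup_le _ hc2
  rintro c ⟨v, hv, rfl⟩
  set M : Matrix (Fin k) (Fin k) ℝ := (n : ℝ)⁻¹ • ∑ i, vecMulVec (W i) (W i) with hM
  set y : Fin k → ℝ := M.mulVec v with hy
  have hdot : ∀ zz : Fin k → ℝ,
      y ⬝ᵥ zz = (n:ℝ)⁻¹ * ∑ i, (W i ⬝ᵥ v) * (W i ⬝ᵥ zz) := by
    intro zz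
    rw [hy, hM, Matrix.smul_mulVec, sum_mulVec', smul_dotProduct, smul_eq_mul,
      sum_dot]
    congr 1
    apply Finset.sum_congr rfl
    intro i _
    rw [vecMulVec_mulVec', smul_dotProduct, smul_eq_mul]
  rcases eq_or_lt_of_le (evNorm_nonneg y) with h0 | h0
  · rw [← h0]; exact hc2
  · set z : Fin k → ℝ := (evNorm y)⁻¹ • y with hzdef
    have hz1 : evNorm z = 1 := by
      rw [hzdef, evNorm_smul, abs_of_pos (by positivity), inv_mul_cancel₀ h0.ne']
    have hyz : evNorm y = y ⬝ᵥ z := by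
      rw [hzdef, dotProduct_smul, smul_eq_mul, dot_self_eq]
      field_simp
    rw [hyz, hdot z]
    have hP := hq v hv
    have hQ' := hq z hz1
    have hPn : (0:ℝ) ≤ (n:ℝ)⁻¹ * ∑ i, (W i ⬝ᵥ v) ^ 2 :=
      mul_nonneg hninv (Finset.sum_nonneg fun i _ => sq_nonneg _)
    have hQn : (0:ℝ) ≤ (n:ℝ)⁻¹ * ∑ i, (W i ⬝ᵥ z) ^ 2 :=
      mul_nonneg hninv (Finset.sum_nonneg fun i _ => sq_nonneg _)
    have hCS := Finset.sum_mul_sq_le_sq_mul_sq Finset.univ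
      (fun i => W i ⬝ᵥ v) (fun i => W i ⬝ᵥ z)
    have hsq2 : ((n:ℝ)⁻¹ * ∑ i, (W i ⬝ᵥ v) * (W i ⬝ᵥ z)) ^ 2
        ≤ ((n:ℝ)⁻¹ * ∑ i, (W i ⬝ᵥ v) ^ 2) * ((n:ℝ)⁻¹ * ∑ i, (W i ⬝ᵥ z) ^ 2) := by
      have h1 : ((n:ℝ)⁻¹ * ∑ i, (W i ⬝ᵥ v) * (W i ⬝ᵥ z)) ^ 2
          = (n:ℝ)⁻¹ * (n:ℝ)⁻¹ * (∑ i, (W i ⬝ᵥ v) * (W i ⬝ᵥ z)) ^ 2 := by ring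
      rw [h1]
      calc (n:ℝ)⁻¹ * (n:ℝ)⁻¹ * (∑ i, (W i ⬝ᵥ v) * (W i ⬝ᵥ z)) ^ 2
          ≤ (n:ℝ)⁻¹ * (n:ℝ)⁻¹ * ((∑ i, (W i ⬝ᵥ v) ^ 2) * ∑ i, (W i ⬝ᵥ z) ^ 2) :=
            mul_le_mul_of_nonneg_left hCS (by positivity)
        _ = ((n:ℝ)⁻¹ * ∑ i, (W i ⬝ᵥ v) ^ 2) * ((n:ℝ)⁻¹ * ∑ i, (W i ⬝ᵥ z) ^ 2) := by ring
    have hfin : ((n:ℝ)⁻¹ * ∑ i, (W i ⬝ᵥ v) * (W i ⬝ᵥ z)) ^ 2 ≤ ((A0 + C0) ^ 2) ^ 2 := by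
      calc ((n:ℝ)⁻¹ * ∑ i, (W i ⬝ᵥ v) * (W i ⬝ᵥ z)) ^ 2
          ≤ ((n:ℝ)⁻¹ * ∑ i, (W i ⬝ᵥ v) ^ 2) * ((n:ℝ)⁻¹ * ∑ i, (W i ⬝ᵥ z) ^ 2) := hsq2
        _ ≤ (A0 + C0) ^ 2 * ((A0 + C0) ^ 2) := mul_le_mul hP hQ' hQn hc2
        _ = ((A0 + C0) ^ 2) ^ 2 := by ring
    have hyz' : (0:ℝ) ≤ (n:ℝ)⁻¹ * ∑ i, (W i ⬝ᵥ v) * (W i ⬝ᵥ z) := by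
      rw [← hdot z, ← hyz]; exact h0.le
    exact le_of_sq_le_sq' hyz' hc2 hfin
end

section
/- Let B ∈ ℝ^{d×k}, B* ∈ ℝ^{d×k} with orthonormal columns, α > 0. Let B = B̂R be the QR factorization of B with B̂ orthonormal. Then ‖B*ᵀ(I_d − αBBᵀ)B*‖₂ ≤ dist(B,B*)² + ‖I_k − αBᵀB‖₂, where dist(B,B*) = ‖B̂*⊥ᵀB̂‖₂ is the principal angle distance. -/
open Matrix
open scoped Matrix.Norms.L2Operator

lemma evNorm_eq_norm {n : Type*} [Fintype n] (v : n → ℝ) :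
    evNorm v = ‖(WithLp.equiv 2 (n → ℝ)).symm v‖ := by
  simp [evNorm, EuclideanSpace.norm_eq, Real.norm_eq_abs, sq_abs]

lemma specNorm_eq_norm {m n : Type*} [Fintype m] [Fintype n] [DecidableEq n] [Nonempty n]
    (A : Matrix m n ℝ) : specNorm A = ‖A‖ := by
  have hub : ∀ c ∈ {c : ℝ | ∃ v : n → ℝ, evNorm v = 1 ∧ c = evNorm (A.mulVec v)}, c ≤ ‖A‖ := by
    rintro c ⟨v, hv, rfl⟩
    rw [evNorm_eq_norm] at hv ⊢
    calc ‖(WithLp.equiv 2 (m → ℝ)).symm (A *ᵥ v)‖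
        ≤ ‖A‖ * ‖(WithLp.equiv 2 (n → ℝ)).symm v‖ := A.l2_opNorm_mulVec _
      _ = ‖A‖ := by rw [hv, mul_one]
  apply le_antisymm
  · exact Real.sSup_le hub (norm_nonneg A)
  · rw [l2_opNorm_def]
    have hnn : 0 ≤ specNorm A := by
      obtain ⟨j⟩ := ‹Nonempty n›
      have h1 : evNorm (Pi.single j 1 : n → ℝ) = 1 := by
        rw [evNorm_eq_norm]
        rw [show ((WithLp.equiv 2 (n → ℝ)).symm (Pi.single j 1) : EuclideanSpace ℝ n) = EuclideanSpace.single j 1 from rfl]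
        simp
      refine le_csSup_of_le ⟨‖A‖, hub⟩ ⟨Pi.single j 1, h1, rfl⟩ ?_
      rw [evNorm_eq_norm]; exact norm_nonneg _
    apply ContinuousLinearMap.opNorm_le_bound _ hnn
    intro x
    rcases eq_or_ne x 0 with rfl | hx
    · simp
    · have hxn : ‖x‖ ≠ 0 := norm_ne_zero_iff.mpr hx
      set v : n → ℝ := ‖x‖⁻¹ • (WithLp.equiv 2 (n → ℝ)) x with hv
      have hv1 : evNorm v = 1 := by
        rw [evNorm_eq_norm, hv]
        rw [show ((WithLp.equiv 2 (n → ℝ)).symm (‖x‖⁻¹ • (WithLp.equiv 2 (n → ℝ)) x) : EuclideanSpace ℝ n) = ‖x‖⁻¹ • x from rfl]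
        rw [norm_smul]
        simp [hxn, abs_of_nonneg (norm_nonneg x)]
      have hmem : evNorm (A *ᵥ v) ∈
          {c : ℝ | ∃ v : n → ℝ, evNorm v = 1 ∧ c = evNorm (A.mulVec v)} :=
        ⟨v, hv1, rfl⟩
      have hle : evNorm (A *ᵥ v) ≤ specNorm A := le_csSup ⟨‖A‖, hub⟩ hmem
      have hAx : (LinearEquiv.trans toEuclideanLin LinearMap.toContinuousLinearMap A) x
          = (WithLp.equiv 2 (m → ℝ)).symm (A *ᵥ (WithLp.equiv 2 (n → ℝ)) x) := rfl
      rw [hAx]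
      have : A *ᵥ (WithLp.equiv 2 (n → ℝ)) x = ‖x‖ • (A *ᵥ v) := by
        rw [hv, mulVec_smul, smul_smul, mul_inv_cancel₀ hxn, one_smul]
      rw [this]
      rw [evNorm_eq_norm] at hle
      calc ‖(WithLp.equiv 2 (m → ℝ)).symm (‖x‖ • (A *ᵥ v))‖
          = ‖x‖ * ‖(WithLp.equiv 2 (m → ℝ)).symm (A *ᵥ v)‖ := by
            rw [show ((WithLp.equiv 2 (m → ℝ)).symm (‖x‖ • (A *ᵥ v)) : EuclideanSpace ℝ m) = ‖x‖ • (WithLp.equiv 2 (m → ℝ)).symm (A *ᵥ v) from rfl]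
            rw [norm_smul]; simp [abs_of_nonneg (norm_nonneg x)]
        _ ≤ ‖x‖ * specNorm A := by
            exact mul_le_mul_of_nonneg_left hle (norm_nonneg x)
        _ = specNorm A * ‖x‖ := mul_comm _ _

lemma specNorm_of_isEmpty {m n : Type*} [Fintype m] [Fintype n] [IsEmpty n]
    (A : Matrix m n ℝ) : specNorm A = 0 := by
  have : {c : ℝ | ∃ v : n → ℝ, evNorm v = 1 ∧ c = evNorm (A.mulVec v)} = ∅ := by
    ext c
    simp only [Set.mem_setOf_eq, Set.mem_empty_iff_false, iff_false]
    rintro ⟨v, hv, -⟩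
    simp [evNorm] at hv
  rw [specNorm, this, Real.sSup_empty]
open Matrix
open scoped Matrix.Norms.L2Operator

variable {k : ℕ}

lemma det_smul_one_add_mul_comm (c : ℝ) (A B : Matrix (Fin k) (Fin k) ℝ) :
    (c • (1 : Matrix (Fin k) (Fin k) ℝ) + A * B).det
      = (c • (1 : Matrix (Fin k) (Fin k) ℝ) + B * A).det := by
  rcases eq_or_ne c 0 with rfl | hc
  · simp [Matrix.det_mul_comm, mul_comm]
  · have h1 : c • (1 : Matrix (Fin k) (Fin k) ℝ) + A * B
        = c • ((1 : Matrix (Fin k) (Fin k) ℝ) + (c⁻¹ • A) * B) := by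
      rw [smul_add, Matrix.smul_mul, smul_smul, mul_inv_cancel₀ hc, one_smul]
    have h2 : c • (1 : Matrix (Fin k) (Fin k) ℝ) + B * A
        = c • ((1 : Matrix (Fin k) (Fin k) ℝ) + B * (c⁻¹ • A)) := by
      rw [smul_add, Matrix.mul_smul, smul_smul, mul_inv_cancel₀ hc, one_smul]
    rw [h1, h2, Matrix.det_smul, Matrix.det_smul, Matrix.det_one_add_mul_comm]

lemma spectrum_one_sub_mul (A B : Matrix (Fin k) (Fin k) ℝ) :
    spectrum ℝ ((1 : Matrix (Fin k) (Fin k) ℝ) - A * B)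
      = spectrum ℝ ((1 : Matrix (Fin k) (Fin k) ℝ) - B * A) := by
  ext μ
  have key : ∀ (M N : Matrix (Fin k) (Fin k) ℝ),
      (algebraMap ℝ (Matrix (Fin k) (Fin k) ℝ)) μ - (1 - M * N)
        = (μ - 1) • (1 : Matrix (Fin k) (Fin k) ℝ) + M * N := by
    intro M N
    rw [Algebra.algebraMap_eq_smul_one, sub_smul, one_smul]
    abel
  simp only [spectrum.mem_iff, key]
  rw [Matrix.isUnit_iff_isUnit_det, Matrix.isUnit_iff_isUnit_det,
    det_smul_one_add_mul_comm]

lemma norm_diagonal_le {v : Fin k → ℝ} {c : ℝ} (hc : 0 ≤ c) (h : ∀ i, |v i| ≤ c) :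
    ‖(diagonal v : Matrix (Fin k) (Fin k) ℝ)‖ ≤ c := by
  rw [Matrix.l2_opNorm_def]
  apply ContinuousLinearMap.opNorm_le_bound _ hc
  intro x
  have hx : (LinearEquiv.trans toEuclideanLin LinearMap.toContinuousLinearMap (diagonal v)) x
      = (WithLp.equiv 2 (Fin k → ℝ)).symm (diagonal v *ᵥ (WithLp.equiv 2 (Fin k → ℝ)) x) := rfl
  rw [hx]
  rw [EuclideanSpace.norm_eq]
  have hxn : ‖x‖ = Real.sqrt (∑ i, x i ^ 2) := by
    rw [EuclideanSpace.norm_eq]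
    simp [Real.norm_eq_abs, sq_abs]
  rw [hxn, ← Real.sqrt_sq hc, ← Real.sqrt_mul (by positivity)]
  apply Real.sqrt_le_sqrt
  rw [Finset.mul_sum]
  apply Finset.sum_le_sum
  intro i _
  simp only [WithLp.equiv_symm_apply, WithLp.ofLp_toLp, mulVec_diagonal, Real.norm_eq_abs, sq_abs]
  have : ((WithLp.equiv 2 (Fin k → ℝ)) x) i = x i := rfl
  rw [this, mul_pow]
  have h1 : v i ^ 2 ≤ c ^ 2 := by
    rw [← sq_abs]
    exact pow_le_pow_left₀ (abs_nonneg _) (h i) 2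
  nlinarith [sq_nonneg (x i), sq_nonneg (v i)]

lemma herm_norm_le [Nonempty (Fin k)] {S T : Matrix (Fin k) (Fin k) ℝ}
    (hS : S.IsHermitian) (hsub : spectrum ℝ S ⊆ spectrum ℝ T) : ‖S‖ ≤ ‖T‖ := by
  have hnt : Nontrivial (Matrix (Fin k) (Fin k) ℝ) := by
    infer_instance
  have hdec := hS.spectral_theorem
  have hU : ‖((hS.eigenvectorUnitary : Matrix (Fin k) (Fin k) ℝ))‖ = 1 :=
    CStarRing.norm_coe_unitary hS.eigenvectorUnitary
  have hUs : ‖(star (hS.eigenvectorUnitary : Matrix (Fin k) (Fin k) ℝ))‖ = 1 :=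
    CStarRing.norm_coe_unitary (star hS.eigenvectorUnitary)
  have heig : ∀ i, |hS.eigenvalues i| ≤ ‖T‖ := by
    intro i
    have := hsub (hS.eigenvalues_mem_spectrum_real i)
    have := spectrum.norm_le_norm_of_mem this
    simpa [Real.norm_eq_abs] using this
  have hD : ‖(diagonal (RCLike.ofReal ∘ hS.eigenvalues) : Matrix (Fin k) (Fin k) ℝ)‖ ≤ ‖T‖ := by
    have : (diagonal (RCLike.ofReal ∘ hS.eigenvalues) : Matrix (Fin k) (Fin k) ℝ)
        = diagonal hS.eigenvalues := by
      congr 1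
    rw [this]
    exact norm_diagonal_le (norm_nonneg T) heig
  calc ‖S‖ = ‖(hS.eigenvectorUnitary : Matrix (Fin k) (Fin k) ℝ)
        * diagonal (RCLike.ofReal ∘ hS.eigenvalues)
        * (star (hS.eigenvectorUnitary : Matrix (Fin k) (Fin k) ℝ))‖ := by rw [Unitary.conjStarAlgAut_apply] at hdec; rw [← hdec]
    _ ≤ ‖(hS.eigenvectorUnitary : Matrix (Fin k) (Fin k) ℝ)
        * diagonal (RCLike.ofReal ∘ hS.eigenvalues)‖
        * ‖(star (hS.eigenvectorUnitary : Matrix (Fin k) (Fin k) ℝ))‖ :=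
      Matrix.l2_opNorm_mul _ _
    _ ≤ ‖(hS.eigenvectorUnitary : Matrix (Fin k) (Fin k) ℝ)‖
        * ‖diagonal (RCLike.ofReal ∘ hS.eigenvalues)‖ * 1 := by
      rw [hUs, mul_one, mul_one]
      exact Matrix.l2_opNorm_mul _ _
    _ ≤ ‖T‖ := by rw [hU, one_mul, mul_one]; exact hD

lemma real_conjTranspose {m n : Type*} (A : Matrix m n ℝ) : Aᴴ = Aᵀ := by
  ext i j; simp [Matrix.conjTranspose_apply]

lemma l2_norm_transpose {m n : Type*} [Fintype m] [Fintype n] [DecidableEq m] [DecidableEq n]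
    (A : Matrix m n ℝ) : ‖Aᵀ‖ = ‖A‖ := by
  rw [← real_conjTranspose, Matrix.l2_opNorm_conjTranspose]

lemma norm_of_colOrtho {d k : ℕ} [Nonempty (Fin k)] {A : Matrix (Fin d) (Fin k) ℝ}
    (h : Aᵀ * A = 1) : ‖A‖ = 1 := by
  have h2 := Matrix.l2_opNorm_conjTranspose_mul_self A
  rw [real_conjTranspose, h, CStarRing.norm_one] at h2
  nlinarith [norm_nonneg A]


/-- `‖B*ᵀ(I_d − αBBᵀ)B*‖₂ ≤ dist(B,B*)² + ‖I_k − αBᵀB‖₂`. -/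
theorem stmt10 {d k : ℕ} (hkd : k ≤ d)
    (B Bhat Bstar : Matrix (Fin d) (Fin k) ℝ) (R : Matrix (Fin k) (Fin k) ℝ)
    (hstar : Bstarᵀ * Bstar = 1) (hQR : B = Bhat * R) (hhat : Bhatᵀ * Bhat = 1)
    (Bperp : Matrix (Fin d) (Fin (d - k)) ℝ) (hperp : Bperpᵀ * Bperp = 1)
    (horth : Bstarᵀ * Bperp = 0)
    (hcomplete : Bstar * Bstarᵀ + Bperp * Bperpᵀ = 1)
    (α : ℝ) (hα : 0 < α) :
    specNorm (Bstarᵀ * (1 - α • (B * Bᵀ)) * Bstar) ≤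
      (specNorm (Bperpᵀ * Bhat)) ^ 2 + specNorm (1 - α • (Bᵀ * B)) := by
  rcases Nat.eq_zero_or_pos k with rfl | hk
  · rw [specNorm_of_isEmpty, specNorm_of_isEmpty, specNorm_of_isEmpty]
    norm_num
  haveI : Nonempty (Fin k) := ⟨⟨0, hk⟩⟩
  rw [specNorm_eq_norm, specNorm_eq_norm, specNorm_eq_norm]
  set N := Bstarᵀ * Bhat with hN
  set K := Bperpᵀ * Bhat with hK
  have hNT : Nᵀ = Bhatᵀ * Bstar := by rw [hN, Matrix.transpose_mul, Matrix.transpose_transpose]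
  have hKT : Kᵀ = Bhatᵀ * Bperp := by rw [hK, Matrix.transpose_mul, Matrix.transpose_transpose]
  -- key algebraic identity
  have hE : Bstarᵀ * (1 - α • (B * Bᵀ)) * Bstar
      = (1 - N * Nᵀ) + N * (1 - α • (R * Rᵀ)) * Nᵀ := by
    rw [hQR, Matrix.transpose_mul, hNT, hN]
    simp only [Matrix.mul_sub, Matrix.sub_mul, Matrix.mul_smul, Matrix.smul_mul,
      Matrix.mul_one, Matrix.one_mul, hstar]
    rw [sub_add_sub_cancel]
    congr 1
    simp only [Matrix.mul_assoc]
  -- 1 - NᵀN = KᵀK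
  have hKN : Nᵀ * N + Kᵀ * K = 1 := by
    have := congrArg (fun X => Bhatᵀ * X * Bhat) hcomplete
    simpa only [Matrix.add_mul, Matrix.mul_add, Matrix.mul_one, hhat, hNT, hKT, hN, hK,
      Matrix.mul_assoc, Matrix.transpose_mul, Matrix.transpose_transpose] using this
  have hsub1 : (1 : Matrix (Fin k) (Fin k) ℝ) - Nᵀ * N = Kᵀ * K := by
    rw [← hKN]; abel
  -- Hermitian facts
  have hherm1 : ((1 : Matrix (Fin k) (Fin k) ℝ) - N * Nᵀ).IsHermitian := by
    show _ᴴ = _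
    rw [real_conjTranspose]
    simp [Matrix.transpose_sub, Matrix.transpose_mul]
  have hherm2 : ((1 : Matrix (Fin k) (Fin k) ℝ) - α • (R * Rᵀ)).IsHermitian := by
    show _ᴴ = _
    rw [real_conjTranspose]
    simp [Matrix.transpose_sub, Matrix.transpose_mul, Matrix.transpose_smul]
  -- spectra
  have hspec1 : spectrum ℝ ((1 : Matrix (Fin k) (Fin k) ℝ) - N * Nᵀ)
      ⊆ spectrum ℝ (Kᵀ * K) := by
    rw [spectrum_one_sub_mul, hsub1]
  have hRB : Bᵀ * B = Rᵀ * R := by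
    rw [hQR, Matrix.transpose_mul]
    calc Rᵀ * Bhatᵀ * (Bhat * R) = Rᵀ * (Bhatᵀ * Bhat) * R := by
          simp only [Matrix.mul_assoc]
      _ = Rᵀ * R := by rw [hhat, Matrix.mul_one]
  have hspec2 : spectrum ℝ ((1 : Matrix (Fin k) (Fin k) ℝ) - α • (R * Rᵀ))
      ⊆ spectrum ℝ ((1 : Matrix (Fin k) (Fin k) ℝ) - α • (Bᵀ * B)) := by
    rw [hRB]
    have h1 : (1 : Matrix (Fin k) (Fin k) ℝ) - α • (R * Rᵀ) = 1 - (α • R) * Rᵀ := by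
      rw [Matrix.smul_mul]
    have h2 : (1 : Matrix (Fin k) (Fin k) ℝ) - α • (Rᵀ * R) = 1 - Rᵀ * (α • R) := by
      rw [Matrix.mul_smul]
    rw [h1, h2, spectrum_one_sub_mul]
  -- norms of orthonormal factors
  have hBhat : ‖Bhat‖ = 1 := norm_of_colOrtho hhat
  have hBstarT : ‖Bstarᵀ‖ = 1 := by rw [l2_norm_transpose]; exact norm_of_colOrtho hstar
  have hNle : ‖N‖ ≤ 1 := by
    calc ‖N‖ ≤ ‖Bstarᵀ‖ * ‖Bhat‖ := Matrix.l2_opNorm_mul _ _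
      _ = 1 := by rw [hBhat, hBstarT, mul_one]
  have hNTle : ‖Nᵀ‖ ≤ 1 := by rw [l2_norm_transpose]; exact hNle
  -- bound term 1
  have hT1 : ‖(1 : Matrix (Fin k) (Fin k) ℝ) - N * Nᵀ‖ ≤ ‖K‖ ^ 2 := by
    calc ‖(1 : Matrix (Fin k) (Fin k) ℝ) - N * Nᵀ‖ ≤ ‖Kᵀ * K‖ := herm_norm_le hherm1 hspec1
      _ = ‖K‖ ^ 2 := by
          rw [← real_conjTranspose, Matrix.l2_opNorm_conjTranspose_mul_self, sq]
  -- bound term 2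
  have hT2 : ‖N * ((1 : Matrix (Fin k) (Fin k) ℝ) - α • (R * Rᵀ)) * Nᵀ‖
      ≤ ‖(1 : Matrix (Fin k) (Fin k) ℝ) - α • (Bᵀ * B)‖ := by
    have hX : ‖(1 : Matrix (Fin k) (Fin k) ℝ) - α • (R * Rᵀ)‖
        ≤ ‖(1 : Matrix (Fin k) (Fin k) ℝ) - α • (Bᵀ * B)‖ := herm_norm_le hherm2 hspec2
    calc ‖N * ((1 : Matrix (Fin k) (Fin k) ℝ) - α • (R * Rᵀ)) * Nᵀ‖
        ≤ ‖N * ((1 : Matrix (Fin k) (Fin k) ℝ) - α • (R * Rᵀ))‖ * ‖Nᵀ‖ :=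
          Matrix.l2_opNorm_mul _ _
      _ ≤ ‖N‖ * ‖(1 : Matrix (Fin k) (Fin k) ℝ) - α • (R * Rᵀ)‖ * ‖Nᵀ‖ :=
          mul_le_mul_of_nonneg_right (Matrix.l2_opNorm_mul _ _) (norm_nonneg _)
      _ ≤ 1 * ‖(1 : Matrix (Fin k) (Fin k) ℝ) - α • (R * Rᵀ)‖ * 1 := by
          apply mul_le_mul
          · exact mul_le_mul_of_nonneg_right hNle (norm_nonneg _)
          · exact hNTle
          · exact norm_nonneg _
          · positivity
      _ = ‖(1 : Matrix (Fin k) (Fin k) ℝ) - α • (R * Rᵀ)‖ := by ring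
      _ ≤ ‖(1 : Matrix (Fin k) (Fin k) ℝ) - α • (Bᵀ * B)‖ := hX
  calc ‖Bstarᵀ * (1 - α • (B * Bᵀ)) * Bstar‖
      = ‖((1 : Matrix (Fin k) (Fin k) ℝ) - N * Nᵀ)
        + N * ((1 : Matrix (Fin k) (Fin k) ℝ) - α • (R * Rᵀ)) * Nᵀ‖ := by rw [hE]
    _ ≤ ‖(1 : Matrix (Fin k) (Fin k) ℝ) - N * Nᵀ‖
        + ‖N * ((1 : Matrix (Fin k) (Fin k) ℝ) - α • (R * Rᵀ)) * Nᵀ‖ := norm_add_le _ _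
    _ ≤ ‖K‖ ^ 2 + ‖(1 : Matrix (Fin k) (Fin k) ℝ) - α • (Bᵀ * B)‖ := add_le_add hT1 hT2
end
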